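/- arXiv:1310.3341 — 2 statements merged into one kernel-verified Lean document; each statement's English description precedes it below -/
import Mathlib

section
/- The bandwidth of the (k−1)-st power of the m-cycle C_m equals 2(k−1), provided m ≥ 4k−3 (so that the power graph is not complete). -/
/-- The bandwidth of a graph: the minimum over all orderings of the vertices of the
maximum index-gap along an edge. -/
noncomputable def bandwidth {V : Type*} [Fintype V] (G : SimpleGraph V) : ℕ :=
  sInf {b | ∃ L : V ≃ Fin (Fintype.card V),
    ∀ u v, G.Adj u v → (((L u : ℕ) : ℤ) - ((L v : ℕ) : ℤ)).natAbs ≤ b}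

/-- The `r`-th power of the `m`-cycle: distinct vertices adjacent iff their cyclic
distance is at most `r` (for `r = 0` this is the edgeless graph on `m` vertices). -/
def cyclePower (m r : ℕ) : SimpleGraph (Fin m) where
  Adj i j := i ≠ j ∧ min ((i.val + m - j.val) % m) ((j.val + m - i.val) % m) ≤ r
  symm := ⟨by rintro i j ⟨hne, hd⟩; exact ⟨hne.symm, by rwa [min_comm]⟩⟩
  loopless := ⟨by rintro i ⟨h, -⟩; exact h rfl⟩

/-!
Listing the vertices of the cycle in the zigzag order `0, m-1, 1, m-2, 2, …` gives vertices at
cyclic distance `d` positions at most `2d` apart, so the bandwidth of `C_m^r` is at most `2r`.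
Conversely, for `2r < m` the graph is `2r`-regular, and in any ordering the `2r` neighbours of the
first vertex occupy distinct positions among the next `b` ones, where `b` is the width.
-/

open Finset SimpleGraph

section Bandwidth

variable {V : Type*} [Fintype V] (G : SimpleGraph V)

lemma bandwidth_le_of_equiv {n : ℕ} (L : V ≃ Fin n) {b : ℕ}
    (hL : ∀ u v, G.Adj u v → (((L u : ℕ) : ℤ) - ((L v : ℕ) : ℤ)).natAbs ≤ b) :
    bandwidth G ≤ b := by
  have hn : Fintype.card V = n := by simpa using Fintype.card_congr L
  exact Nat.sInf_le ⟨L.trans (finCongr hn.symm), by simpa using hL⟩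

lemma exists_equiv_forall_adj_natAbs_le_bandwidth :
    ∃ L : V ≃ Fin (Fintype.card V), ∀ u v, G.Adj u v →
      (((L u : ℕ) : ℤ) - ((L v : ℕ) : ℤ)).natAbs ≤ bandwidth G := by
  exact Nat.sInf_mem (s := {b | ∃ L : V ≃ Fin (Fintype.card V),
    ∀ u v, G.Adj u v → (((L u : ℕ) : ℤ) - ((L v : ℕ) : ℤ)).natAbs ≤ b}) ⟨Fintype.card V, Fintype.equivFin V, fun u v _ => by
    have := (Fintype.equivFin V u).isLt
    have := (Fintype.equivFin V v).isLt
    omega⟩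

lemma degree_le_of_equiv_of_val_eq_zero [DecidableRel G.Adj] {n : ℕ} (L : V ≃ Fin n) {b : ℕ}
    (hL : ∀ u v, G.Adj u v → (((L u : ℕ) : ℤ) - ((L v : ℕ) : ℤ)).natAbs ≤ b)
    {v : V} (hv : (L v : ℕ) = 0) : G.degree v ≤ b := by
  rw [← card_neighborFinset_eq_degree]
  calc #(G.neighborFinset v) ≤ #(Icc 1 b) := by
        refine card_le_card_of_injOn (fun u => (L u : ℕ)) (fun u hu => ?_)
          (fun u _ w _ h => L.injective (Fin.ext h))
        have hadj : G.Adj v u := (mem_neighborFinset G v u).mp hu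
        have hne : (L u : ℕ) ≠ L v := Fin.val_ne_of_ne (L.injective.ne hadj.ne.symm)
        have := hL v u hadj
        simp only [coe_Icc, Set.mem_Icc]
        omega
    _ = b := by simp

lemma minDegree_le_bandwidth [DecidableRel G.Adj] : G.minDegree ≤ bandwidth G := by
  obtain ⟨L, hL⟩ := exists_equiv_forall_adj_natAbs_le_bandwidth G
  rcases isEmpty_or_nonempty V with hV | hV
  · simp [minDegree]
  · let v := L.symm ⟨0, Fintype.card_pos⟩
    exact (G.minDegree_le_degree v).trans
      (degree_le_of_equiv_of_val_eq_zero G L hL (by simp [v]))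

end Bandwidth

section CyclePower

variable {m r : ℕ}

instance : DecidableRel (cyclePower m r).Adj :=
  fun _ _ => inferInstanceAs (Decidable (_ ∧ _))

lemma cyclePower_adj_iff {i j : Fin m} :
    (cyclePower m r).Adj i j ↔ i ≠ j ∧ min (i - j).val (j - i).val ≤ r := by
  have hsub : ∀ a b : Fin m, a.val + m - b.val = m - b.val + a.val := fun a b => by omega
  simp only [cyclePower, Fin.val_sub, hsub]

lemma cyclePower_adj_add_right [NeZero m] (i j a : Fin m) :
    (cyclePower m r).Adj (i + a) (j + a) ↔ (cyclePower m r).Adj i j := by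
  simp only [cyclePower_adj_iff, add_sub_add_right_eq_sub, ne_eq, add_left_inj]

lemma cyclePower_adj_iff_of_lt {i j : Fin m} (h : i.val < j.val) :
    (cyclePower m r).Adj i j ↔ min (j.val - i.val) (m - (j.val - i.val)) ≤ r := by
  have h₁ : (i.val + m - j.val) % m = m - (j.val - i.val) := by
    rw [Nat.mod_eq_of_lt (by omega)]
    omega
  have h₂ : (j.val + m - i.val) % m = j.val - i.val := by
    rw [show j.val + m - i.val = j.val - i.val + m by omega, Nat.add_mod_right,
      Nat.mod_eq_of_lt (by omega)]
  simp only [cyclePower, h₁, h₂, min_comm (m - _), ne_eq, Fin.ne_of_val_ne h.ne, not_false_eq_true,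
    true_and]

lemma cyclePower_degree_zero [NeZero m] (h : 2 * r < m) : (cyclePower m r).degree 0 = 2 * r := by
  have hnbrs : ((cyclePower m r).neighborFinset 0).map Fin.valEmbedding =
      Icc 1 r ∪ Icc (m - r) (m - 1) := by
    ext n
    simp only [mem_map, mem_neighborFinset, Fin.valEmbedding_apply, mem_union, mem_Icc]
    constructor
    · rintro ⟨j, hj, rfl⟩
      have hpos : (0 : Fin m).val < j.val := by
        simpa [Fin.pos_iff_ne_zero] using hj.ne.symm
      rw [cyclePower_adj_iff_of_lt hpos] at hj
      simp only [Fin.val_zero] at hj hpos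
      omega
    · intro hn
      refine ⟨⟨n, by omega⟩, ?_, rfl⟩
      rw [cyclePower_adj_iff_of_lt (by simp only [Fin.val_zero]; omega)]
      simp only [Fin.val_zero]
      omega
  have hdisj : Disjoint (Icc 1 r) (Icc (m - r) (m - 1)) := by
    rw [Finset.disjoint_left]
    intro n h₁ h₂
    simp only [mem_Icc] at h₁ h₂
    omega
  rw [← card_neighborFinset_eq_degree, ← card_map Fin.valEmbedding, hnbrs,
    card_union_of_disjoint hdisj, Nat.card_Icc, Nat.card_Icc]
  omega

lemma cyclePower_isRegularOfDegree (h : 2 * r < m) :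
    (cyclePower m r).IsRegularOfDegree (2 * r) := fun v => by
  have : NeZero m := ⟨by omega⟩
  let ρ : cyclePower m r ≃g cyclePower m r := ⟨Equiv.addRight v, cyclePower_adj_add_right _ _ v⟩
  convert (ρ.degree_eq 0).trans (cyclePower_degree_zero h) using 2
  exact (zero_add v).symm

lemma two_mul_le_bandwidth_cyclePower (h : 2 * r < m) : 2 * r ≤ bandwidth (cyclePower m r) := by
  have : NeZero m := ⟨by omega⟩
  simpa [(cyclePower_isRegularOfDegree h).minDegree_eq] using minDegree_le_bandwidth (cyclePower m r)

def zigzag (m : ℕ) (i : Fin m) : Fin m :=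
  if h : 2 * i.val < m then ⟨2 * i.val, h⟩ else ⟨2 * (m - i.val) - 1, by omega⟩

lemma zigzag_injective : Function.Injective (zigzag m) := by
  intro i j hij
  unfold zigzag at hij
  split_ifs at hij <;> simp only [Fin.mk.injEq] at hij <;> exact Fin.ext (by omega)

lemma natAbs_zigzag_sub_le {i j : Fin m} (h : i.val < j.val) :
    (((zigzag m i : ℕ) : ℤ) - ((zigzag m j : ℕ) : ℤ)).natAbs ≤
      2 * min (j.val - i.val) (m - (j.val - i.val)) := by
  unfold zigzag
  split_ifs <;> dsimp only <;> omega

lemma bandwidth_cyclePower_le (m r : ℕ) : bandwidth (cyclePower m r) ≤ 2 * r := by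
  refine bandwidth_le_of_equiv _
    (Equiv.ofBijective (zigzag m) (Finite.injective_iff_bijective.mp zigzag_injective))
    fun u v huv => ?_
  simp only [Equiv.ofBijective_apply]
  rcases lt_or_gt_of_ne (Fin.val_ne_of_ne huv.ne) with h | h
  · have := natAbs_zigzag_sub_le h
    rw [cyclePower_adj_iff_of_lt h] at huv
    omega
  · have := natAbs_zigzag_sub_le h
    rw [adj_comm, cyclePower_adj_iff_of_lt h] at huv
    omega

theorem bandwidth_cyclePower (h : 2 * r < m) : bandwidth (cyclePower m r) = 2 * r :=
  (bandwidth_cyclePower_le m r).antisymm (two_mul_le_bandwidth_cyclePower h)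

end CyclePower

/-- The bandwidth of the `(k-1)`-st power of the `m`-cycle equals `2(k-1)`,
provided `m ≥ 4k - 3`. -/
theorem stmt_6 (m k : ℕ) (hk : 1 ≤ k) (hm : 4 * k - 3 ≤ m) :
    bandwidth (cyclePower m (k - 1)) = 2 * (k - 1) :=
  bandwidth_cyclePower (by omega)
end

section
/- Let H be a graph on m vertices whose complement has bandwidth b under the ordering h_1,…,h_m, and let φ, ψ be partial homomorphisms from G to H_k := H[{h_1,…,h_k}] (k ≤ m) that map exactly the same set of vertices of G, and agree on all vertices mapped to h_{k−b+1},…,h_k. If a vertex v of G can be added to φ by mapping it to h_{k+1} (k < m) yielding a partial homomorphism, then v can likewise be added to ψ mapped to h_{k+1}. -/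
/-- `φ` is a partial homomorphism from `G` to `H`: whenever both endpoints of an edge
are mapped, their images are adjacent. -/
def PartialHom {V W : Type*} (G : SimpleGraph V) (H : SimpleGraph W)
    (φ : V → Option W) : Prop :=
  ∀ u v, G.Adj u v → ∀ a b, φ u = some a → φ v = some b → H.Adj a b

theorem SimpleGraph.adj_of_compl_bandwidth_lt {m b : ℕ} {H : SimpleGraph (Fin m)}
    (hb : ∀ i j : Fin m, Hᶜ.Adj i j → (((i : ℕ) : ℤ) - ((j : ℕ) : ℤ)).natAbs ≤ b)
    {i j : Fin m} (hij : (i : ℕ) + b < j) : H.Adj i j := by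
  by_contra hnadj
  have hne : i ≠ j := fun h => by simp [h] at hij
  have := hb i j ⟨hne, hnadj⟩
  omega

theorem stmt_18_general {V : Type*} {m : ℕ} (G : SimpleGraph V) (H : SimpleGraph (Fin m))
    (b k : ℕ) (hk : k < m)
    (hb : ∀ i j : Fin m, Hᶜ.Adj i j → (((i : ℕ) : ℤ) - ((j : ℕ) : ℤ)).natAbs ≤ b)
    (φ ψ : V → Option (Fin m))
    (hdom : ∀ v, φ v = none ↔ ψ v = none)
    (hagree₂ : ∀ v a, ψ v = some a → k - b ≤ (a : ℕ) → φ v = some a)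
    (v : V) (hv : φ v = none)
    (hext : ∀ u, G.Adj v u → ∀ a, φ u = some a → H.Adj a ⟨k, hk⟩) :
    ψ v = none ∧ ∀ u, G.Adj v u → ∀ a, ψ u = some a → H.Adj a ⟨k, hk⟩ := by
  refine ⟨(hdom v).mp hv, fun u hu a ha => ?_⟩
  by_cases hlate : k - b ≤ (a : ℕ)
  · exact hext u hu a (hagree₂ u a ha hlate)
  · exact H.adj_of_compl_bandwidth_lt hb (by simp only; omega)

/-- Suppose the identity ordering of `H` (on `Fin m`) achieves bandwidth `b` of the
complement of `H`, and `φ, ψ` are partial homomorphisms from `G` to `H_k` (the first `k`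
vertices of `H`) with the same domain which agree on all vertices mapped to the last `b`
of the first `k` vertices. If `v` (unmapped) can be added to `φ` mapped to `h_{k+1}`
yielding a partial homomorphism, then the same holds for `ψ`. -/
theorem stmt_18 {V : Type*} {m : ℕ} (G : SimpleGraph V) (H : SimpleGraph (Fin m))
    (b k : ℕ) (hk : k < m)
    (hb : ∀ i j : Fin m, Hᶜ.Adj i j → (((i : ℕ) : ℤ) - ((j : ℕ) : ℤ)).natAbs ≤ b)
    (φ ψ : V → Option (Fin m))
    (hφ : PartialHom G H φ) (hψ : PartialHom G H ψ)
    (hφk : ∀ v a, φ v = some a → (a : ℕ) < k)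
    (hψk : ∀ v a, ψ v = some a → (a : ℕ) < k)
    (hdom : ∀ v, φ v = none ↔ ψ v = none)
    (hagree₁ : ∀ v a, φ v = some a → k - b ≤ (a : ℕ) → ψ v = some a)
    (hagree₂ : ∀ v a, ψ v = some a → k - b ≤ (a : ℕ) → φ v = some a)
    (v : V) (hv : φ v = none)
    (hext : ∀ u, G.Adj v u → ∀ a, φ u = some a → H.Adj a ⟨k, hk⟩) :
    ψ v = none ∧ ∀ u, G.Adj v u → ∀ a, ψ u = some a → H.Adj a ⟨k, hk⟩ :=
  stmt_18_general G H b k hk hb φ ψ hdom hagree₂ v hv hext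
end
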